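/- arXiv:1301.4794 — 5 statements merged into one kernel-verified Lean document; each statement's English description precedes it below -/
import Mathlib

section
/- Let d ≥ 1 and let f : ℝ^d → ℝ be infinitely differentiable and satisfy, for every m ∈ ℕ, the bound Σ_{|β| = m} ‖D^β f‖_∞ / β! ≤ 1, where ‖·‖_∞ denotes the supremum over the cube [−1/2, 1/2]^d. Then for every k ∈ ℕ and every x ∈ [−1/2, 1/2]^d one has |f(x) − (T_k f)(x)| ≤ (1/2)^{k+1}. -/
/-- Iterated partial derivative of `f` in the `i`-th coordinate direction, `n` times. -/
noncomputable def Dpow {d : ℕ} (i : Fin d) : ℕ → ((Fin d → ℝ) → ℝ) → ((Fin d → ℝ) → ℝ)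
  | 0, f => f
  | n + 1, f => fun x => fderiv ℝ (Dpow i n f) x (Pi.single i 1)

/-- The mixed partial derivative `D^α f` for a multi-index `α ∈ ℕ₀^d`. -/
noncomputable def Dmulti {d : ℕ} (α : Fin d → ℕ) (f : (Fin d → ℝ) → ℝ) : (Fin d → ℝ) → ℝ :=
  (List.finRange d).foldr (fun i g => Dpow i (α i) g) f

/-- The sup-norm of `g` over the cube `[-1/2, 1/2]^d`. -/
noncomputable def supCube {d : ℕ} (g : (Fin d → ℝ) → ℝ) : ℝ :=
  sSup ((fun x => |g x|) '' Set.Icc (fun _ : Fin d => -(1/2 : ℝ)) (fun _ => (1/2 : ℝ)))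

variable {d : ℕ}

/-- single partial derivative -/
noncomputable def pd (i : Fin d) (g : (Fin d → ℝ) → ℝ) : (Fin d → ℝ) → ℝ :=
  fun x => fderiv ℝ g x (Pi.single i 1)

local notation "SM" => ContDiff ℝ ((⊤ : ℕ∞) : WithTop ℕ∞)

lemma infty_add_one : ((⊤ : ℕ∞) : WithTop ℕ∞) + 1 ≤ ((⊤ : ℕ∞) : WithTop ℕ∞) := by
  norm_num

lemma pd_smooth {g : (Fin d → ℝ) → ℝ} (hg : SM g) (i : Fin d) : SM (pd i g) :=
  (hg.fderiv_right infty_add_one).clm_apply contDiff_const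

lemma Dpow_succ (i : Fin d) (n : ℕ) (g : (Fin d → ℝ) → ℝ) :
    Dpow i (n + 1) g = pd i (Dpow i n g) := rfl

lemma Dpow_smooth {g : (Fin d → ℝ) → ℝ} (hg : SM g) (i : Fin d) (n : ℕ) :
    SM (Dpow i n g) := by
  induction n with
  | zero => exact hg
  | succ n ih => rw [Dpow_succ]; exact pd_smooth ih i

lemma pd_comm {g : (Fin d → ℝ) → ℝ} (hg : SM g) (i j : Fin d) :
    pd i (pd j g) = pd j (pd i g) := by
  have hdiff : ∀ y, HasFDerivAt g (fderiv ℝ g y) y := fun y =>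
    (hg.differentiable (by norm_num)).differentiableAt.hasFDerivAt
  funext y
  have hd2 : HasFDerivAt (fderiv ℝ g) (fderiv ℝ (fderiv ℝ g) y) y :=
    ((hg.fderiv_right infty_add_one).differentiable (by norm_num)).differentiableAt.hasFDerivAt
  have key : ∀ v w : Fin d → ℝ,
      fderiv ℝ (fun z => fderiv ℝ g z w) y v = fderiv ℝ (fderiv ℝ g) y v w := by
    intro v w
    have : (fun z => fderiv ℝ g z w) =
        (ContinuousLinearMap.apply ℝ ℝ w) ∘ (fderiv ℝ g) := rfl
    rw [this, ((ContinuousLinearMap.apply ℝ ℝ w).hasFDerivAt.comp y hd2).fderiv]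
    rfl
  show fderiv ℝ (fun z => fderiv ℝ g z (Pi.single j 1)) y (Pi.single i 1)
      = fderiv ℝ (fun z => fderiv ℝ g z (Pi.single i 1)) y (Pi.single j 1)
  rw [key, key]
  exact second_derivative_symmetric hdiff hd2 _ _

lemma pd_Dpow_comm {g : (Fin d → ℝ) → ℝ} (hg : SM g) (i j : Fin d) (n : ℕ) :
    pd i (Dpow j n g) = Dpow j n (pd i g) := by
  induction n with
  | zero => rfl
  | succ n ih =>
    rw [Dpow_succ, Dpow_succ, pd_comm (Dpow_smooth hg j n) i j, ih]

lemma Dpow_succ' (i : Fin d) (n : ℕ) (g : (Fin d → ℝ) → ℝ) :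
    Dpow i (n + 1) g = Dpow i n (pd i g) := by
  induction n with
  | zero => rfl
  | succ n ih => rw [Dpow_succ, ih, ← Dpow_succ]

/-- foldr of Dpow over a list -/
noncomputable def Dlist (l : List (Fin d)) (α : Fin d → ℕ) (f : (Fin d → ℝ) → ℝ) :
    (Fin d → ℝ) → ℝ :=
  l.foldr (fun i g => Dpow i (α i) g) f

lemma Dmulti_eq_Dlist (α : Fin d → ℕ) (f : (Fin d → ℝ) → ℝ) :
    Dmulti α f = Dlist (List.finRange d) α f := rfl

lemma Dlist_smooth {f : (Fin d → ℝ) → ℝ} (hf : SM f) (l : List (Fin d)) (α : Fin d → ℕ) :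
    SM (Dlist l α f) := by
  induction l with
  | nil => exact hf
  | cons j t ih => exact Dpow_smooth ih j (α j)

lemma pd_Dlist {f : (Fin d → ℝ) → ℝ} (hf : SM f) (l : List (Fin d)) (α : Fin d → ℕ)
    (i : Fin d) : pd i (Dlist l α f) = Dlist l α (pd i f) := by
  induction l with
  | nil => rfl
  | cons j t ih =>
    show pd i (Dpow j (α j) (Dlist t α f)) = Dpow j (α j) (Dlist t α (pd i f))
    rw [pd_Dpow_comm (Dlist_smooth hf t α) i j, ih]

lemma Dlist_congr (l : List (Fin d)) {α β : Fin d → ℕ} (h : ∀ j ∈ l, α j = β j)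
    (f : (Fin d → ℝ) → ℝ) : Dlist l α f = Dlist l β f := by
  induction l with
  | nil => rfl
  | cons j t ih =>
    show Dpow j (α j) (Dlist t α f) = Dpow j (β j) (Dlist t β f)
    rw [h j List.mem_cons_self, ih (fun j hj => h j (List.mem_cons_of_mem _ hj))]

lemma Dlist_update {f : (Fin d → ℝ) → ℝ} (hf : SM f) (l : List (Fin d)) (hl : l.Nodup)
    (α : Fin d → ℕ) (i : Fin d) (hi : i ∈ l) :
    Dlist l (Function.update α i (α i + 1)) f = Dlist l α (pd i f) := by
  induction l with
  | nil => simp at hi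
  | cons j t ih =>
    rcases List.nodup_cons.mp hl with ⟨hjt, hnd⟩
    by_cases hji : j = i
    · subst hji
      have hjnot : j ∉ t := hjt
      show Dpow j (Function.update α j (α j + 1) j) (Dlist t (Function.update α j (α j + 1)) f)
          = Dpow j (α j) (Dlist t α (pd j f))
      rw [Function.update_self]
      rw [Dlist_congr t (fun a ha => Function.update_of_ne (by rintro rfl; exact hjnot ha) _ _) f]
      rw [Dpow_succ', pd_Dlist hf t α j]
    · have hit : i ∈ t := by
        rcases List.mem_cons.mp hi with h | h
        · exact absurd h.symm hji
        · exact h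
      show Dpow j (Function.update α i (α i + 1) j) (Dlist t (Function.update α i (α i + 1)) f)
          = Dpow j (α j) (Dlist t α (pd i f))
      rw [Function.update_of_ne hji, ih hnd hit]

lemma Dmulti_smooth {f : (Fin d → ℝ) → ℝ} (hf : SM f) (α : Fin d → ℕ) : SM (Dmulti α f) :=
  Dlist_smooth hf _ α

lemma pd_Dmulti {f : (Fin d → ℝ) → ℝ} (hf : SM f) (α : Fin d → ℕ) (i : Fin d) :
    pd i (Dmulti α f) = Dmulti (Function.update α i (α i + 1)) f := by
  rw [Dmulti_eq_Dlist, Dmulti_eq_Dlist,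
    Dlist_update hf _ (List.nodup_finRange d) α i (List.mem_finRange i),
    pd_Dlist hf _ α i]

lemma Dmulti_zero (f : (Fin d → ℝ) → ℝ) : Dmulti 0 f = f := by
  rw [Dmulti_eq_Dlist]
  induction (List.finRange d) with
  | nil => rfl
  | cons j t ih => exact ih

lemma hasDerivAt_line {g : (Fin d → ℝ) → ℝ} (hg : SM g) (x : Fin d → ℝ) (t : ℝ) :
    HasDerivAt (fun s : ℝ => g (s • x)) (∑ i, x i * pd i g (t • x)) t := by
  have hline : HasDerivAt (fun s : ℝ => s • x) x t := by
    simpa using (hasDerivAt_id t).smul_const x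
  have hgd : HasFDerivAt g (fderiv ℝ g (t • x)) (t • x) :=
    (hg.differentiable (by norm_num)).differentiableAt.hasFDerivAt
  have := hgd.comp_hasDerivAt t hline
  refine this.congr_deriv ?_
  have hx : x = ∑ i, x i • (Pi.single i (1:ℝ) : Fin d → ℝ) := by
    funext j
    simp [Finset.sum_apply, Pi.single_apply, Finset.sum_ite_eq, eq_comm]
  have key : ∀ L : (Fin d → ℝ) →L[ℝ] ℝ, L x = ∑ i, x i * L (Pi.single i 1) := by
    intro L
    conv_lhs => rw [hx]
    rw [map_sum]
    simp [mul_comm]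
  rw [key (fderiv ℝ g (t • x))]
  rfl

noncomputable def cfac (β : Fin d → ℕ) : ℝ := ∏ i, ((β i).factorial : ℝ)

lemma cfac_pos (β : Fin d → ℕ) : 0 < cfac β :=
  Finset.prod_pos fun i _ => by exact_mod_cast (β i).factorial_pos

lemma cfac_update {γ : Fin d → ℕ} {i : Fin d} (h : γ i ≠ 0) :
    cfac γ = (γ i : ℝ) * cfac (Function.update γ i (γ i - 1)) := by
  unfold cfac
  rw [← Finset.mul_prod_erase Finset.univ (fun j => ((γ j).factorial : ℝ)) (Finset.mem_univ i),
      ← Finset.mul_prod_erase Finset.univ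
        (fun j => (((Function.update γ i (γ i - 1)) j).factorial : ℝ)) (Finset.mem_univ i)]
  have herase : ∏ j ∈ Finset.univ.erase i, (((Function.update γ i (γ i - 1)) j).factorial : ℝ)
      = ∏ j ∈ Finset.univ.erase i, ((γ j).factorial : ℝ) := by
    refine Finset.prod_congr rfl fun j hj => ?_
    rw [Function.update_of_ne (Finset.mem_erase.mp hj).1]
  rw [herase, Function.update_self, ← mul_assoc]
  congr 1
  have := Nat.mul_factorial_pred h
  push_cast [← this]
  ring

lemma xp_update {γ : Fin d → ℕ} {i : Fin d} (h : γ i ≠ 0) (x : Fin d → ℝ) :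
    (∏ j, x j ^ γ j) = x i * ∏ j, x j ^ (Function.update γ i (γ i - 1) j) := by
  rw [← Finset.mul_prod_erase Finset.univ (fun j => x j ^ γ j) (Finset.mem_univ i),
      ← Finset.mul_prod_erase Finset.univ
        (fun j => x j ^ (Function.update γ i (γ i - 1) j)) (Finset.mem_univ i)]
  have herase : ∏ j ∈ Finset.univ.erase i, x j ^ (Function.update γ i (γ i - 1) j)
      = ∏ j ∈ Finset.univ.erase i, x j ^ γ j := by
    refine Finset.prod_congr rfl fun j hj => ?_
    rw [Function.update_of_ne (Finset.mem_erase.mp hj).1]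
  rw [herase, Function.update_self, ← mul_assoc]
  congr 1
  rw [show γ i = γ i - 1 + 1 by omega, pow_succ, Nat.add_sub_cancel]
  ring

lemma comb (F : (Fin d → ℕ) → ℝ) (x : Fin d → ℝ) (m : ℕ) :
    ∑ β ∈ Finset.Nat.antidiagonalTuple d m, ((m.factorial : ℝ) / cfac β) *
        ((∑ i, x i * F (Function.update β i (β i + 1))) * ∏ i, x i ^ β i)
    = ∑ γ ∈ Finset.Nat.antidiagonalTuple d (m + 1),
        (((m + 1).factorial : ℝ) / cfac γ) * (F γ * ∏ i, x i ^ γ i) := by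
  classical
  have step1 : ∀ β, ((m.factorial : ℝ) / cfac β) *
        ((∑ i, x i * F (Function.update β i (β i + 1))) * ∏ i, x i ^ β i)
      = ∑ i, ((m.factorial : ℝ) / cfac β) * x i * F (Function.update β i (β i + 1))
          * ∏ j, x j ^ β j := by
    intro β
    rw [Finset.sum_mul, Finset.mul_sum]
    exact Finset.sum_congr rfl fun i _ => by ring
  simp_rw [step1]
  rw [← Finset.sum_product']
  set T := (Finset.Nat.antidiagonalTuple d (m + 1) ×ˢ (Finset.univ : Finset (Fin d))).filter
    (fun p => p.1 p.2 ≠ 0) with hT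
  rw [Finset.sum_nbij' (i := fun p : (Fin d → ℕ) × Fin d =>
        (Function.update p.1 p.2 (p.1 p.2 + 1), p.2))
      (j := fun q : (Fin d → ℕ) × Fin d => (Function.update q.1 q.2 (q.1 q.2 - 1), q.2))
      (t := T)
      (g := fun q => ((m.factorial : ℝ) / cfac (Function.update q.1 q.2 (q.1 q.2 - 1)))
        * x q.2 * F q.1 * ∏ j, x j ^ (Function.update q.1 q.2 (q.1 q.2 - 1) j))]
  · -- now sum over T equals RHS
    rw [hT, Finset.sum_filter, Finset.sum_product]
    refine Finset.sum_congr rfl fun γ hγ => ?_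
    have hsum : ∑ i, γ i = m + 1 := Finset.Nat.mem_antidiagonalTuple.mp hγ
    have key : ∀ i : Fin d, (if γ i ≠ 0 then
          ((m.factorial : ℝ) / cfac (Function.update γ i (γ i - 1)))
            * x i * F γ * ∏ j, x j ^ (Function.update γ i (γ i - 1) j)
        else 0)
        = ((m.factorial : ℝ) * (γ i : ℝ) / cfac γ) * (F γ * ∏ j, x j ^ γ j) := by
      intro i
      by_cases h : γ i = 0
      · simp [h]
      · rw [if_pos h, cfac_update h, xp_update h x]
        have h1 : cfac (Function.update γ i (γ i - 1)) > 0 := cfac_pos _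
        have h2 : (γ i : ℝ) ≠ 0 := Nat.cast_ne_zero.mpr h
        field_simp
    simp_rw [key]
    rw [← Finset.sum_mul, ← Finset.sum_div, ← Finset.mul_sum]
    have : ∑ i, (γ i : ℝ) = (m : ℝ) + 1 := by
      rw [← Nat.cast_sum, hsum]; push_cast; ring
    rw [this]
    have : ((m + 1).factorial : ℝ) = (m.factorial : ℝ) * ((m : ℝ) + 1) := by
      rw [Nat.factorial_succ]; push_cast; ring
    rw [this]
  · intro p hp
    rw [Finset.mem_product] at hp
    have hsum : ∑ j, p.1 j = m := Finset.Nat.mem_antidiagonalTuple.mp hp.1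
    rw [hT, Finset.mem_filter, Finset.mem_product]
    refine ⟨⟨Finset.Nat.mem_antidiagonalTuple.mpr ?_, Finset.mem_univ _⟩, ?_⟩
    · rw [Finset.sum_update_of_mem (Finset.mem_univ p.2)]
      rw [← Finset.add_sum_erase Finset.univ p.1 (Finset.mem_univ p.2),
        Finset.erase_eq] at hsum
      omega
    · simp
  · intro q hq
    rw [hT, Finset.mem_filter, Finset.mem_product] at hq
    have hsum : ∑ j, q.1 j = m + 1 := Finset.Nat.mem_antidiagonalTuple.mp hq.1.1
    rw [Finset.mem_product]
    refine ⟨Finset.Nat.mem_antidiagonalTuple.mpr ?_, Finset.mem_univ _⟩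
    rw [Finset.sum_update_of_mem (Finset.mem_univ q.2)]
    rw [← Finset.add_sum_erase Finset.univ q.1 (Finset.mem_univ q.2),
      Finset.erase_eq] at hsum
    have := hq.2
    omega
  · intro p hp
    simp only []
    rw [Function.update_idem, Function.update_self]
    simp [Function.update_eq_self]
  · intro q hq
    rw [hT, Finset.mem_filter] at hq
    simp only []
    rw [Function.update_idem, Function.update_self,
      show q.1 q.2 - 1 + 1 = q.1 q.2 by have := hq.2; omega]
    simp [Function.update_eq_self]
  · intro p hp
    simp only []
    rw [Function.update_idem, Function.update_self, Nat.add_sub_cancel,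
      Function.update_eq_self]


lemma abs_le_supCube {g : (Fin d → ℝ) → ℝ} (hg : Continuous g) {y : Fin d → ℝ}
    (hy : y ∈ Set.Icc (fun _ : Fin d => -(1/2 : ℝ)) (fun _ => (1/2 : ℝ))) :
    |g y| ≤ supCube g := by
  apply le_csSup
  · exact (isCompact_Icc.image_of_continuousOn hg.abs.continuousOn).bddAbove
  · exact Set.mem_image_of_mem _ hy

noncomputable def GG (f : (Fin d → ℝ) → ℝ) (x : Fin d → ℝ) (m : ℕ) : ℝ → ℝ :=
  fun t => ∑ β ∈ Finset.Nat.antidiagonalTuple d m,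
    ((m.factorial : ℝ) / cfac β) * (Dmulti β f (t • x) * ∏ i, x i ^ β i)

lemma GG_zero (f : (Fin d → ℝ) → ℝ) (x : Fin d → ℝ) (t : ℝ) : GG f x 0 t = f (t • x) := by
  unfold GG
  rw [Finset.Nat.antidiagonalTuple_zero_right, Finset.sum_singleton]
  simp [cfac, Dmulti_zero]

lemma hasDerivAt_GG {f : (Fin d → ℝ) → ℝ} (hf : SM f) (x : Fin d → ℝ) (m : ℕ) (t : ℝ) :
    HasDerivAt (GG f x m) (GG f x (m + 1) t) t := by
  have key : ∀ β : Fin d → ℕ, HasDerivAt (fun s : ℝ => Dmulti β f (s • x))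
      (∑ i, x i * Dmulti (Function.update β i (β i + 1)) f (t • x)) t := by
    intro β
    have h := hasDerivAt_line (Dmulti_smooth hf β) x t
    have e : ∀ i, pd i (Dmulti β f) = Dmulti (Function.update β i (β i + 1)) f :=
      fun i => pd_Dmulti hf β i
    simp only [e] at h
    exact h
  have H : HasDerivAt (GG f x m)
      (∑ β ∈ Finset.Nat.antidiagonalTuple d m, ((m.factorial : ℝ) / cfac β) *
        ((∑ i, x i * Dmulti (Function.update β i (β i + 1)) f (t • x)) * ∏ i, x i ^ β i)) t :=
    HasDerivAt.fun_sum fun β _ => ((key β).mul_const _).const_mul _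
  rwa [comb (fun γ => Dmulti γ f (t • x)) x m] at H

lemma iteratedDerivWithin_GG {f : (Fin d → ℝ) → ℝ} (hf : SM f) (x : Fin d → ℝ) (m : ℕ) :
    ∀ t ∈ Set.Icc (0:ℝ) 1,
      iteratedDerivWithin m (fun s : ℝ => f (s • x)) (Set.Icc 0 1) t = GG f x m t := by
  induction m with
  | zero =>
    intro t ht
    rw [iteratedDerivWithin_zero, GG_zero]
  | succ m ih =>
    intro t ht
    have hu : UniqueDiffOn ℝ (Set.Icc (0:ℝ) 1) := uniqueDiffOn_Icc one_pos
    rw [iteratedDerivWithin_succ]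
    rw [derivWithin_congr ih (ih t ht)]
    exact ((hasDerivAt_GG hf x m t).hasDerivWithinAt).derivWithin (hu t ht)


/-- If `f` is `C^∞` and `Σ_{|β| = m} ‖D^β f‖_∞/β! ≤ 1` for every `m`, then the degree-`k`
Taylor polynomial of `f` about `0` approximates `f` on `[-1/2,1/2]^d` with error `(1/2)^{k+1}`. -/
theorem stmt1 {d : ℕ} (hd : 1 ≤ d) (f : (Fin d → ℝ) → ℝ) (hf : ContDiff ℝ (⊤ : ℕ∞) f)
    (hb : ∀ m : ℕ, ∑ β ∈ Finset.Nat.antidiagonalTuple d m,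
      supCube (Dmulti β f) / (∏ i, ((β i).factorial : ℝ)) ≤ 1)
    (k : ℕ) (x : Fin d → ℝ)
    (hx : x ∈ Set.Icc (fun _ : Fin d => -(1/2 : ℝ)) (fun _ => (1/2 : ℝ))) :
    |f x - ∑ m ∈ Finset.range (k + 1), ∑ α ∈ Finset.Nat.antidiagonalTuple d m,
        Dmulti α f 0 / (∏ i, ((α i).factorial : ℝ)) * ∏ i, x i ^ α i|
      ≤ (1/2 : ℝ) ^ (k + 1) := by
  have hsm : SM f := hf.of_le (by simp)
  set g : ℝ → ℝ := fun t => f (t • x) with hg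
  have hgsm : SM g := hsm.comp ((contDiff_id (E := ℝ)).smul contDiff_const)
  -- Taylor's theorem
  have hcd : ContDiffOn ℝ (k : ℕ) g (Set.Icc 0 1) :=
    (hgsm.of_le (by exact_mod_cast le_top)).contDiffOn
  have hdiff : DifferentiableOn ℝ (iteratedDerivWithin k g (Set.Icc 0 1)) (Set.Ioo 0 1) := by
    intro t ht
    have htI : t ∈ Set.Icc (0:ℝ) 1 := Set.mem_Icc_of_Ioo ht
    refine (((hasDerivAt_GG hsm x k t).differentiableAt).differentiableWithinAt).congr
      (fun y hy => ?_) ?_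
    · exact iteratedDerivWithin_GG hsm x k y (Set.mem_Icc_of_Ioo hy)
    · exact iteratedDerivWithin_GG hsm x k t htI
  obtain ⟨c, hc, heq⟩ := taylor_mean_remainder_lagrange (n := k) (x₀ := 0) (x := 1)
    one_pos.ne (by rwa [Set.uIcc_of_le zero_le_one])
    (by rwa [Set.uIcc_of_le zero_le_one, Set.uIoo_of_le zero_le_one])
  rw [Set.uIoo_of_le zero_le_one] at hc
  rw [Set.uIcc_of_le zero_le_one] at heq
  have hcI : c ∈ Set.Icc (0:ℝ) 1 := Set.mem_Icc_of_Ioo hc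
  -- identify the Taylor polynomial
  have htay : taylorWithinEval g k (Set.Icc 0 1) 0 1
      = ∑ m ∈ Finset.range (k + 1), ∑ α ∈ Finset.Nat.antidiagonalTuple d m,
        Dmulti α f 0 / (∏ i, ((α i).factorial : ℝ)) * ∏ i, x i ^ α i := by
    rw [taylor_within_apply]
    refine Finset.sum_congr rfl fun m hm => ?_
    rw [iteratedDerivWithin_GG hsm x m 0 (by norm_num)]
    unfold GG
    rw [smul_eq_mul, Finset.mul_sum]
    refine Finset.sum_congr rfl fun β hβ => ?_
    have hm0 : ((m.factorial : ℝ)) ≠ 0 := by positivity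
    have hc0 : cfac β ≠ 0 := (cfac_pos β).ne'
    rw [zero_smul]
    field_simp [cfac]
    simp only [cfac]
    ring
  have hg1 : g 1 = f x := by rw [hg]; simp
  rw [← hg1, ← htay]
  -- remainder estimate
  rw [iteratedDerivWithin_GG hsm x (k + 1) c hcI] at heq
  rw [heq]
  have hbound : |GG f x (k + 1) c| ≤ ((k + 1).factorial : ℝ) * (1/2) ^ (k + 1) := by
    have hcx : c • x ∈ Set.Icc (fun _ : Fin d => -(1/2 : ℝ)) (fun _ => (1/2 : ℝ)) := by
      constructor <;> intro i <;>
        simp only [Pi.smul_apply, smul_eq_mul] <;>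
        nlinarith [hx.1 i, hx.2 i, hc.1, hc.2]
    have step : ∀ β ∈ Finset.Nat.antidiagonalTuple d (k + 1),
        |(((k+1).factorial : ℝ) / cfac β) * (Dmulti β f (c • x) * ∏ i, x i ^ β i)|
          ≤ (((k+1).factorial : ℝ) / cfac β) * (supCube (Dmulti β f) * (1/2) ^ (k + 1)) := by
      intro β hβ
      have hβsum : ∑ i, β i = k + 1 := Finset.Nat.mem_antidiagonalTuple.mp hβ
      have h1 : |Dmulti β f (c • x)| ≤ supCube (Dmulti β f) :=
        abs_le_supCube (Dmulti_smooth hsm β).continuous hcx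
      have h2 : |∏ i, x i ^ β i| ≤ (1/2 : ℝ) ^ (k + 1) := by
        rw [Finset.abs_prod]
        calc ∏ i, |x i ^ β i| ≤ ∏ i, (1/2 : ℝ) ^ β i := by
              refine Finset.prod_le_prod (fun i _ => abs_nonneg _) fun i _ => ?_
              rw [abs_pow]
              exact pow_le_pow_left₀ (abs_nonneg _)
                (abs_le.mpr ⟨by simpa using hx.1 i, by simpa using hx.2 i⟩) _
          _ = (1/2 : ℝ) ^ (k + 1) := by
              rw [Finset.prod_pow_eq_pow_sum, hβsum]
      have hpos : (0:ℝ) < ((k+1).factorial : ℝ) / cfac β := by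
        apply div_pos (by positivity) (cfac_pos β)
      rw [abs_mul, abs_mul, abs_of_pos hpos]
      refine mul_le_mul_of_nonneg_left ?_ hpos.le
      exact mul_le_mul h1 h2 (abs_nonneg _) ((abs_nonneg _).trans h1)
    calc |GG f x (k + 1) c| ≤ ∑ β ∈ Finset.Nat.antidiagonalTuple d (k + 1),
          |(((k+1).factorial : ℝ) / cfac β) * (Dmulti β f (c • x) * ∏ i, x i ^ β i)| :=
        Finset.abs_sum_le_sum_abs _ _
      _ ≤ ∑ β ∈ Finset.Nat.antidiagonalTuple d (k + 1),
          (((k+1).factorial : ℝ) / cfac β) * (supCube (Dmulti β f) * (1/2) ^ (k + 1)) :=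
        Finset.sum_le_sum step
      _ = ((k+1).factorial : ℝ) * (1/2) ^ (k + 1) *
          ∑ β ∈ Finset.Nat.antidiagonalTuple d (k + 1), supCube (Dmulti β f) / cfac β := by
        rw [Finset.mul_sum]
        exact Finset.sum_congr rfl fun β _ => by ring
      _ ≤ ((k+1).factorial : ℝ) * (1/2) ^ (k + 1) * 1 := by
        refine mul_le_mul_of_nonneg_left ?_ (by positivity)
        exact hb (k + 1)
      _ = ((k+1).factorial : ℝ) * (1/2) ^ (k + 1) := by ring
  have hfpos : (0:ℝ) < ((k+1).factorial : ℝ) := by positivity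
  have h10 : |((1:ℝ) - 0) ^ (k+1)| = 1 := by norm_num
  rw [abs_div, abs_mul, h10, mul_one, abs_of_pos hfpos, div_le_iff₀ hfpos]
  calc |GG f x (k + 1) c| ≤ ((k+1).factorial : ℝ) * (1/2) ^ (k + 1) := hbound
    _ = (1/2) ^ (k + 1) * ((k+1).factorial : ℝ) := by ring
end

section
/- There exists a constant t > 0 with the following property: for every d ≥ 1 and every ε ∈ (0,1), if k is defined by k + 1 = ⌈ln(1/ε)/ln 2⌉, then ln binom(d+k, k) ≤ t·(1 + ln(1/ε))·(1 + ln d). (This proves quasi-polynomial tractability of uniform approximation on the cube for the class F_d^1, since binom(d+k,k) function values suffice to achieve uniform error ε for all f in F_d^1.) -/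
lemma choose_le_pow_aux (d k : ℕ) : (d + k).choose k ≤ (d + 1) ^ k := by
  induction k with
  | zero => simp
  | succ k ih =>
    have h := Nat.add_one_mul_choose_eq (d + k) k
    have h2 : (d + (k + 1)).choose (k + 1) * (k + 1) ≤ (d + 1) ^ (k + 1) * (k + 1) := by
      have e : d + (k + 1) = (d + k) + 1 := by omega
      rw [e, ← h]
      calc (d + k + 1) * (d + k).choose k ≤ ((d + 1) * (k + 1)) * ((d + 1) ^ k) := by
            apply Nat.mul_le_mul _ ih
            nlinarith
        _ = (d + 1) ^ (k + 1) * (k + 1) := by ring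
    exact Nat.le_of_mul_le_mul_right h2 (Nat.succ_pos k)

/-- Quasi-polynomial tractability bound: there is a constant `t > 0` such that for all `d ≥ 1`,
all `ε ∈ (0,1)` and `k` defined by `k + 1 = ⌈ln(1/ε)/ln 2⌉`, we have
`ln C(d+k, k) ≤ t (1 + ln(1/ε)) (1 + ln d)`. -/
theorem stmt5 :
    ∃ t : ℝ, 0 < t ∧ ∀ d : ℕ, 1 ≤ d → ∀ ε : ℝ, 0 < ε → ε < 1 → ∀ k : ℕ,
      (k : ℤ) + 1 = ⌈Real.log (1 / ε) / Real.log 2⌉ →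
      Real.log ((d + k).choose k) ≤ t * (1 + Real.log (1 / ε)) * (1 + Real.log d) := by
  refine ⟨2, by norm_num, fun d hd ε hε hε1 k hk => ?_⟩
  set L := Real.log (1 / ε) with hLdef
  have hL : 0 ≤ L := Real.log_nonneg (by rw [le_div_iff₀ hε]; linarith)
  have hlog2 : (0.6931471803 : ℝ) < Real.log 2 := Real.log_two_gt_d9
  have hd1 : (1 : ℝ) ≤ (d : ℝ) := by exact_mod_cast hd
  have hlogd : 0 ≤ Real.log d := Real.log_nonneg hd1
  -- k < L / log 2
  have hceil : ((⌈L / Real.log 2⌉ : ℤ) : ℝ) < L / Real.log 2 + 1 := Int.ceil_lt_add_one _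
  have hk' : ((k : ℝ) + 1) < L / Real.log 2 + 1 := by
    have : (((k : ℤ) + 1 : ℤ) : ℝ) = (k : ℝ) + 1 := by push_cast; ring
    rw [← this, hk]; exact hceil
  have hklt : (k : ℝ) < L / Real.log 2 := by linarith
  have hk2L : (k : ℝ) ≤ 2 * L := by
    have hmul : (k : ℝ) * Real.log 2 < L := (lt_div_iff₀ (by linarith)).mp hklt
    nlinarith [Nat.cast_nonneg (α := ℝ) k]
  -- log choose ≤ k * log (d+1)
  have hchoose : ((d + k).choose k : ℝ) ≤ ((d + 1 : ℕ) : ℝ) ^ k := by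
    exact_mod_cast choose_le_pow_aux d k
  have hpos : (0 : ℝ) < ((d + k).choose k : ℝ) := by
    exact_mod_cast Nat.choose_pos (by omega : k ≤ d + k)
  have h1 : Real.log ((d + k).choose k) ≤ (k : ℝ) * Real.log ((d + 1 : ℕ) : ℝ) := by
    calc Real.log ((d + k).choose k) ≤ Real.log (((d + 1 : ℕ) : ℝ) ^ k) :=
          Real.log_le_log hpos hchoose
      _ = (k : ℝ) * Real.log ((d + 1 : ℕ) : ℝ) := by rw [Real.log_pow]
  -- log (d+1) ≤ 1 + log d
  have h2 : Real.log ((d + 1 : ℕ) : ℝ) ≤ 1 + Real.log d := by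
    have : Real.log ((d + 1 : ℕ) : ℝ) ≤ Real.log (2 * d) := by
      apply Real.log_le_log (by positivity)
      push_cast; linarith
    rw [Real.log_mul (by norm_num) (by positivity)] at this
    have hlog2' : Real.log 2 ≤ 1 := by
      have := Real.log_two_lt_d9; linarith
    linarith
  have hlogd1pos : 0 ≤ Real.log ((d + 1 : ℕ) : ℝ) := Real.log_nonneg (by push_cast; linarith)
  calc Real.log ((d + k).choose k) ≤ (k : ℝ) * Real.log ((d + 1 : ℕ) : ℝ) := h1
    _ ≤ (2 * L) * (1 + Real.log d) := by
        apply mul_le_mul hk2L h2 hlogd1pos (by linarith)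
    _ ≤ 2 * (1 + L) * (1 + Real.log d) := by nlinarith
end

section
/- Fix a constant C > 0. For ε ∈ (0,1) and d ≥ 1 define k(ε,d) = ⌈max(e²·C·√d, ln(1/ε))⌉ and N(ε,d) = binom(d + k(ε,d), k(ε,d)). Then ln N(ε,d)/(ε^{−1} + d) → 0 as ε^{−1} + d → ∞; that is, for every δ > 0 there exists M > 0 such that for all ε ∈ (0,1) and all d ≥ 1 with ε^{−1} + d ≥ M one has ln N(ε,d)/(ε^{−1} + d) ≤ δ. (This establishes weak tractability of uniform approximation on Euclidean balls of volume one for the class F_d^2.) -/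
/-- The number of sampling points `k(ε,d)`. -/
noncomputable def kNum (C : ℝ) (ε : ℝ) (d : ℕ) : ℕ :=
  ⌈max (Real.exp 1 ^ 2 * C * Real.sqrt d) (Real.log (1 / ε))⌉₊

/-- The information bound `N(ε,d) = C(d + k(ε,d), k(ε,d))`. -/
noncomputable def NNum (C : ℝ) (ε : ℝ) (d : ℕ) : ℕ :=
  (d + kNum C ε d).choose (kNum C ε d)

lemma log_le_two_sqrt {x : ℝ} (hx : 0 ≤ x) : Real.log x ≤ 2 * Real.sqrt x := by
  rcases eq_or_lt_of_le hx with h | h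
  · simp [← h]
  · have h1 : Real.log x = 2 * Real.log (Real.sqrt x) := by
      rw [Real.log_sqrt hx]; ring
    have h2 := Real.log_le_sub_one_of_pos (Real.sqrt_pos.mpr h)
    nlinarith [Real.sqrt_nonneg x]

set_option maxHeartbeats 1000000 in
/-- Weak tractability: `ln N(ε,d)/(ε⁻¹ + d) → 0` as `ε⁻¹ + d → ∞`. -/
theorem stmt12 (C : ℝ) (hC : 0 < C) :
    ∀ δ : ℝ, 0 < δ → ∃ M : ℝ, 0 < M ∧ ∀ ε : ℝ, 0 < ε → ε < 1 → ∀ d : ℕ, 1 ≤ d →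
      M ≤ ε⁻¹ + d →
      Real.log (NNum C ε d) / (ε⁻¹ + d) ≤ δ := by
  intro δ hδ
  set A : ℝ := Real.exp 1 ^ 2 * C with hAdef
  have hA : 0 < A := by positivity
  set B : ℝ := Real.log (A + 4) with hBdef
  have hB : 0 < B := Real.log_pos (by linarith)
  set K : ℝ := (A + 3) * (B + 4) with hKdef
  have hK : 0 < K := by positivity
  refine ⟨(K / δ + 1) ^ 4, by positivity, ?_⟩
  intro ε hε hε1 d hd hM
  set S : ℝ := ε⁻¹ + d with hSdef
  have hεinv : 1 < ε⁻¹ := (one_lt_inv₀ hε).mpr hε1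
  have hd1 : (1 : ℝ) ≤ d := by exact_mod_cast hd
  have hSpos : 0 < S := by simp only [hSdef]; linarith
  set u : ℝ := Real.sqrt (Real.sqrt S) with hudef
  have hupos : 0 ≤ u := Real.sqrt_nonneg _
  have hsS : Real.sqrt S ^ 2 = S := Real.sq_sqrt hSpos.le
  have hu2 : u ^ 2 = Real.sqrt S := Real.sq_sqrt (Real.sqrt_nonneg S)
  have hu4 : u ^ 4 = S := by
    have : u ^ 4 = (u ^ 2) ^ 2 := by ring
    rw [this, hu2, hsS]
  have hKδ : 0 ≤ K / δ := by positivity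
  have hu_ge : K / δ + 1 ≤ u := by
    have h1 : Real.sqrt ((K / δ + 1) ^ 4) ≤ Real.sqrt S := by
      apply Real.sqrt_le_sqrt; linarith [hM]
    have h2 : Real.sqrt ((K / δ + 1) ^ 4) = (K / δ + 1) ^ 2 := by
      rw [show ((K / δ + 1) ^ 4) = ((K / δ + 1) ^ 2) ^ 2 by ring]
      exact Real.sqrt_sq (by positivity)
    have h3 : Real.sqrt ((K / δ + 1) ^ 2) ≤ u := by
      apply Real.sqrt_le_sqrt; rw [← h2]; exact h1
    rwa [Real.sqrt_sq (by positivity)] at h3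
  have hu1 : 1 ≤ u := by linarith
  -- bound on k
  set k : ℕ := kNum C ε d with hkdef
  have hL : 0 < Real.log (1 / ε) := Real.log_pos ((one_lt_one_div hε) hε1)
  have hAd : 0 ≤ A * Real.sqrt d := by positivity
  have hk_le : (k : ℝ) ≤ A * Real.sqrt d + Real.log (1 / ε) + 1 := by
    have h0 : (0 : ℝ) ≤ max (A * Real.sqrt d) (Real.log (1 / ε)) :=
      le_max_of_le_left hAd
    have hceil := (Nat.ceil_lt_add_one h0).le
    have hmax : max (A * Real.sqrt d) (Real.log (1 / ε))
        ≤ A * Real.sqrt d + Real.log (1 / ε) :=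
      max_le (le_add_of_nonneg_right hL.le) (le_add_of_nonneg_left hAd)
    calc (k : ℝ) ≤ max (A * Real.sqrt d) (Real.log (1 / ε)) + 1 := hceil
      _ ≤ A * Real.sqrt d + Real.log (1 / ε) + 1 := by linarith
  have hdS : (d : ℝ) ≤ S := by simp only [hSdef]; linarith
  have hεS : ε⁻¹ ≤ S := by simp only [hSdef]; linarith
  have hsd : Real.sqrt d ≤ u ^ 2 := by
    rw [hu2]; exact Real.sqrt_le_sqrt hdS
  have hL2 : Real.log (1 / ε) ≤ 2 * u ^ 2 := by
    have h1 : Real.log (1 / ε) ≤ 2 * Real.sqrt (1 / ε) := log_le_two_sqrt (by positivity)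
    have h2 : Real.sqrt (1 / ε) ≤ u ^ 2 := by
      rw [hu2]; apply Real.sqrt_le_sqrt; rw [one_div]; exact hεS
    linarith
  have hu2' : u ^ 2 ≤ u ^ 4 := pow_le_pow_right₀ hu1 (by norm_num)
  have h1u2 : 1 ≤ u ^ 2 := one_le_pow₀ hu1
  have hAsd : A * Real.sqrt d ≤ A * u ^ 2 := mul_le_mul_of_nonneg_left hsd hA.le
  have hk2 : (k : ℝ) ≤ (A + 3) * u ^ 2 := by linarith [hk_le, hAsd, hL2, h1u2]
  have hk2' : (k : ℝ) ≤ (A + 3) * u ^ 4 := by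
    have := mul_le_mul_of_nonneg_left hu2' (show (0:ℝ) ≤ A + 3 by linarith)
    linarith
  have hn : ((d + k : ℕ) : ℝ) ≤ (A + 4) * u ^ 4 := by
    push_cast
    have : (d : ℝ) ≤ u ^ 4 := by rw [hu4]; exact hdS
    linarith
  have hn1 : (1 : ℕ) ≤ d + k := le_add_right hd
  have hn1' : (1 : ℝ) ≤ ((d + k : ℕ) : ℝ) := by exact_mod_cast hn1
  -- log N ≤ k * log (d+k)
  have hNpos : 0 < NNum C ε d := Nat.choose_pos (Nat.le_add_left _ _)
  have hchoose : (NNum C ε d : ℝ) ≤ ((d + k : ℕ) : ℝ) ^ k := by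
    have := Nat.choose_le_pow (d + k) k
    calc (NNum C ε d : ℝ) ≤ ((d + k) ^ k : ℕ) := by exact_mod_cast this
      _ = ((d + k : ℕ) : ℝ) ^ k := by push_cast; ring
  have hlogN : Real.log (NNum C ε d) ≤ (k : ℝ) * Real.log ((d + k : ℕ) : ℝ) := by
    calc Real.log (NNum C ε d) ≤ Real.log (((d + k : ℕ) : ℝ) ^ k) :=
          Real.log_le_log (by exact_mod_cast hNpos) hchoose
      _ = (k : ℝ) * Real.log ((d + k : ℕ) : ℝ) := Real.log_pow _ k
  have hlogn : Real.log ((d + k : ℕ) : ℝ) ≤ B + 4 * u := by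
    have h1 : Real.log ((d + k : ℕ) : ℝ) ≤ Real.log ((A + 4) * u ^ 4) :=
      Real.log_le_log (by linarith) hn
    have h2 : Real.log ((A + 4) * u ^ 4) = B + 4 * Real.log u := by
      rw [Real.log_mul (by linarith) (by positivity), Real.log_pow]
      push_cast
      rw [hBdef]
    have h3 : Real.log u ≤ u := by
      have := Real.log_le_sub_one_of_pos (lt_of_lt_of_le one_pos hu1)
      linarith
    linarith
  have hlogn0 : 0 ≤ Real.log ((d + k : ℕ) : ℝ) := Real.log_nonneg hn1'
  have hk0 : (0 : ℝ) ≤ (k : ℝ) := Nat.cast_nonneg k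
  have hmain : Real.log (NNum C ε d) ≤ K * u ^ 3 := by
    have h1 : (k : ℝ) * Real.log ((d + k : ℕ) : ℝ) ≤ ((A + 3) * u ^ 2) * (B + 4 * u) :=
      mul_le_mul hk2 hlogn hlogn0 (by positivity)
    have h2 : ((A + 3) * u ^ 2) * (B + 4 * u) ≤ K * u ^ 3 := by
      rw [hKdef]
      have hu23 : u ^ 2 ≤ u ^ 3 := pow_le_pow_right₀ hu1 (by norm_num)
      have h3 := mul_le_mul_of_nonneg_left hu23 (show (0:ℝ) ≤ (A + 3) * B by positivity)
      nlinarith [h3]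
    linarith
  rw [div_le_iff₀ hSpos]
  have hδu : K ≤ δ * u := by
    have h1 : δ * (K / δ + 1) = K + δ := by field_simp
    have h2 := mul_le_mul_of_nonneg_left hu_ge hδ.le
    linarith
  calc Real.log (NNum C ε d) ≤ K * u ^ 3 := hmain
    _ ≤ (δ * u) * u ^ 3 := mul_le_mul_of_nonneg_right hδu (by positivity)
    _ = δ * S := by rw [← hu4]; ring
end

section
/- Let d ≥ 1, k ∈ ℕ, r > 0, and let h : ℝ^d → [0,∞] be measurable. Then ∫_{B(0,r)} ‖x‖_2^{k+1} · (∫_0^1 (1−t)^k · h(t·x) dt) dx ≤ (r^{k+d}/(k+d)) · ∫_{B(0,r)} ‖y‖_2^{1−d} · h(y) dy, where B(0,r) = {x ∈ ℝ^d : ‖x‖_2 ≤ r} and the integrals are with respect to Lebesgue measure. -/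
open MeasureTheory
open scoped ENNReal

/-!
Bound `(1 - t) ^ k` by `1`, exchange the integrals and substitute `y = t • x`: for fixed `t` the
inner integral becomes `t ^ (-(d + k + 1)) * ∫_{B(0, t r)} ‖y‖ ^ (k + 1) * h y`. Exchanging the
integrals again, each `y` carries the weight `∫_{‖y‖/r}^1 t ^ (-(d + k + 1)) dt`, which is at
most `(r / ‖y‖) ^ (d + k) / (d + k)`, and
`‖y‖ ^ (k + 1) * (r / ‖y‖) ^ (d + k) = r ^ (d + k) * ‖y‖ ^ (1 - d)`.
-/

open Metric Set Module

section Scaling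

variable {E : Type*} [NormedAddCommGroup E] [NormedSpace ℝ E] [MeasurableSpace E] [BorelSpace E]
  [FiniteDimensional ℝ E] (μ : Measure E) [μ.IsAddHaarMeasure]

theorem lintegral_comp_smul_of_pos {t : ℝ} (ht : 0 < t) {f : E → ℝ≥0∞} (hf : Measurable f) :
    ∫⁻ x, f (t • x) ∂μ = ENNReal.ofReal ((t ^ finrank ℝ E)⁻¹) * ∫⁻ y, f y ∂μ := by
  rw [← lintegral_map hf (measurable_const_smul t), Measure.map_addHaar_smul μ ht.ne',
    lintegral_smul_measure, abs_of_pos (by positivity), smul_eq_mul]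

theorem setLIntegral_closedBall_comp_smul_of_pos {t : ℝ} (ht : 0 < t) {f : E → ℝ≥0∞}
    (hf : Measurable f) (r : ℝ) :
    ∫⁻ x in closedBall 0 r, f (t • x) ∂μ
      = ENNReal.ofReal ((t ^ finrank ℝ E)⁻¹) * ∫⁻ y in closedBall 0 (t * r), f y ∂μ := by
  have hball : (t • ·) ⁻¹' closedBall (0 : E) (t * r) = closedBall 0 r := by
    ext x
    simp [norm_smul, abs_of_pos ht, mul_le_mul_iff_right₀ ht]
  rw [← lintegral_indicator measurableSet_closedBall,
    ← lintegral_indicator measurableSet_closedBall,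
    ← lintegral_comp_smul_of_pos μ ht (hf.indicator measurableSet_closedBall), ← hball]
  rfl

theorem setLIntegral_closedBall_norm_pow_mul_comp_smul_of_pos {t : ℝ} (ht : 0 < t)
    {f : E → ℝ≥0∞} (hf : Measurable f) (m : ℕ) (r : ℝ) :
    ∫⁻ x in closedBall 0 r, ENNReal.ofReal (‖x‖ ^ m) * f (t • x) ∂μ
      = ENNReal.ofReal ((t ^ (finrank ℝ E + m))⁻¹) *
          ∫⁻ y in closedBall 0 (t * r), ENNReal.ofReal (‖y‖ ^ m) * f y ∂μ := by
  have hnorm (x : E) : ENNReal.ofReal (‖x‖ ^ m) * f (t • x)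
      = ENNReal.ofReal ((t ^ m)⁻¹) * (ENNReal.ofReal (‖t • x‖ ^ m) * f (t • x)) := by
    rw [← mul_assoc, ← ENNReal.ofReal_mul (by positivity), norm_smul, Real.norm_of_nonneg ht.le,
      mul_pow, inv_mul_cancel_left₀ (by positivity)]
  simp_rw [hnorm]
  rw [lintegral_const_mul' _ _ ENNReal.ofReal_ne_top,
    setLIntegral_closedBall_comp_smul_of_pos μ ht
      (f := fun y ↦ ENNReal.ofReal (‖y‖ ^ m) * f y) (by fun_prop) r, ← mul_assoc,
    ← ENNReal.ofReal_mul (by positivity), pow_add, mul_inv, mul_comm ((t ^ m)⁻¹)]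

end Scaling

theorem lintegral_Ici_inv_pow_succ {n : ℕ} (hn : 0 < n) {a : ℝ} (ha : 0 < a) :
    ∫⁻ t in Ici a, ENNReal.ofReal ((t ^ (n + 1))⁻¹) = ENNReal.ofReal ((a ^ n)⁻¹ / n) := by
  have hexp : -(n + 1 : ℝ) < -1 := by linarith [(Nat.cast_pos.2 hn : (0 : ℝ) < n)]
  have hrpow : ∀ t ∈ Ioi a,
      ENNReal.ofReal ((t ^ (n + 1))⁻¹) = ENNReal.ofReal (t ^ (-(n + 1 : ℝ))) := by
    intro t ht
    rw [Real.rpow_neg (ha.trans ht).le, ← Real.rpow_natCast, Nat.cast_succ]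
  rw [setLIntegral_congr Ioi_ae_eq_Ici.symm, setLIntegral_congr_fun measurableSet_Ioi hrpow,
    ← ofReal_integral_eq_lintegral_ofReal (integrableOn_Ioi_rpow_of_lt hexp ha)
      ((ae_restrict_mem measurableSet_Ioi).mono fun t ht ↦ Real.rpow_nonneg (ha.trans ht).le _),
    integral_Ioi_rpow_of_lt hexp ha, show -(n + 1 : ℝ) + 1 = -n by ring, Real.rpow_neg ha.le,
    Real.rpow_natCast, neg_div_neg_eq]

theorem setLIntegral_Ioo_inv_pow_mul_indicator_closedBall_le {F : Type*}
    [SeminormedAddCommGroup F] {n : ℕ} (hn : 0 < n) {r : ℝ} (hr : 0 < r) (g : F → ℝ≥0∞) (y : F) :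
    ∫⁻ t in Ioo 0 1, ENNReal.ofReal ((t ^ (n + 1))⁻¹) * (closedBall 0 (t * r)).indicator g y
      ≤ (closedBall 0 r).indicator (fun y ↦ ENNReal.ofReal (r ^ n / n) * (g y / ‖y‖ₑ ^ n)) y := by
  by_cases hyr : y ∈ closedBall 0 r
  swap
  · have hzero : ∀ t ∈ Ioo (0 : ℝ) 1,
        ENNReal.ofReal ((t ^ (n + 1))⁻¹) * (closedBall 0 (t * r)).indicator g y = 0 := by
      intro t ht
      have : y ∉ closedBall 0 (t * r) := fun hy ↦
        hyr (closedBall_subset_closedBall (mul_le_of_le_one_left hr.le ht.2.le) hy)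
      rw [indicator_of_notMem this, mul_zero]
    rw [setLIntegral_congr_fun measurableSet_Ioo hzero, lintegral_zero]
    exact zero_le
  rw [indicator_of_mem hyr]
  set w : ℝ → ℝ≥0∞ := fun t ↦ ENNReal.ofReal ((t ^ (n + 1))⁻¹)
  have hbound : ∀ t ∈ Ioo (0 : ℝ) 1, w t * (closedBall 0 (t * r)).indicator g y
      ≤ (Ici (‖y‖ / r)).indicator w t * g y := by
    intro t ht
    by_cases hyt : y ∈ closedBall 0 (t * r)
    · have : ‖y‖ / r ≤ t := (div_le_iff₀ hr).2 (mem_closedBall_zero_iff.1 hyt)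
      rw [indicator_of_mem hyt, indicator_of_mem (mem_Ici.2 this)]
    · rw [indicator_of_notMem hyt, mul_zero]
      exact zero_le
  calc ∫⁻ t in Ioo 0 1, w t * (closedBall 0 (t * r)).indicator g y
      ≤ ∫⁻ t in Ioo 0 1, (Ici (‖y‖ / r)).indicator w t * g y :=
        setLIntegral_mono' measurableSet_Ioo hbound
    _ ≤ ∫⁻ t, (Ici (‖y‖ / r)).indicator w t * g y := setLIntegral_le_lintegral _ _
    _ = (∫⁻ t in Ici (‖y‖ / r), w t) * g y := by
        rw [lintegral_mul_const _ ((by fun_prop : Measurable w).indicator measurableSet_Ici),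
          lintegral_indicator measurableSet_Ici]
    _ ≤ ENNReal.ofReal (r ^ n / n) * (g y / ‖y‖ₑ ^ n) := by
        rcases (norm_nonneg y).eq_or_lt with hy0 | hy0
        · have hc : ENNReal.ofReal (r ^ n / n) ≠ 0 := (ENNReal.ofReal_pos.2 (by positivity)).ne'
          rw [← ofReal_norm, ← hy0, ENNReal.ofReal_zero, zero_pow hn.ne', div_eq_mul_inv (g y),
            ENNReal.inv_zero, mul_comm (g y), ← mul_assoc, ENNReal.mul_top hc]
          exact mul_le_mul_left le_top _
        · rw [lintegral_Ici_inv_pow_succ hn (by positivity), div_eq_mul_inv (g y),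
            ← ofReal_norm, ← ENNReal.ofReal_pow (norm_nonneg y),
            ← ENNReal.ofReal_inv_of_pos (by positivity), mul_comm (g y), ← mul_assoc,
            ← ENNReal.ofReal_mul (by positivity)]
          refine le_of_eq (congrArg (· * g y) (congrArg ENNReal.ofReal ?_))
          rw [div_pow]
          field_simp

theorem lintegral_Ioo_inv_pow_mul_setLIntegral_closedBall_le {F : Type*}
    [SeminormedAddCommGroup F] [MeasurableSpace F] [OpensMeasurableSpace F] (ν : Measure F)
    [SFinite ν] {n : ℕ} (hn : 0 < n) {r : ℝ} (hr : 0 < r) {g : F → ℝ≥0∞} (hg : Measurable g) :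
    ∫⁻ t in Ioo 0 1, ENNReal.ofReal ((t ^ (n + 1))⁻¹) * ∫⁻ y in closedBall 0 (t * r), g y ∂ν
      ≤ ENNReal.ofReal (r ^ n / n) * ∫⁻ y in closedBall 0 r, g y / ‖y‖ₑ ^ n ∂ν := by
  have hmeas : Measurable (Function.uncurry fun (t : ℝ) (y : F) ↦
      ENNReal.ofReal ((t ^ (n + 1))⁻¹) * (closedBall 0 (t * r)).indicator g y) := by
    have hset : MeasurableSet {p : ℝ × F | ‖p.2‖ ≤ p.1 * r} :=
      measurableSet_le (by fun_prop) (by fun_prop)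
    refine Measurable.mul (by fun_prop) ?_
    convert (hg.comp measurable_snd).indicator hset using 1
    ext p
    simp [indicator]
  calc ∫⁻ t in Ioo 0 1, ENNReal.ofReal ((t ^ (n + 1))⁻¹) * ∫⁻ y in closedBall 0 (t * r), g y ∂ν
      = ∫⁻ t in Ioo 0 1, ∫⁻ y, ENNReal.ofReal ((t ^ (n + 1))⁻¹) *
          (closedBall 0 (t * r)).indicator g y ∂ν := by
        refine lintegral_congr fun t ↦ ?_
        rw [lintegral_const_mul' _ _ ENNReal.ofReal_ne_top,
          lintegral_indicator measurableSet_closedBall]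
    _ = ∫⁻ y, (∫⁻ t in Ioo 0 1, ENNReal.ofReal ((t ^ (n + 1))⁻¹) *
          (closedBall 0 (t * r)).indicator g y) ∂ν :=
        lintegral_lintegral_swap hmeas.aemeasurable
    _ ≤ ∫⁻ y, (closedBall 0 r).indicator
          (fun y ↦ ENNReal.ofReal (r ^ n / n) * (g y / ‖y‖ₑ ^ n)) y ∂ν :=
        lintegral_mono fun y ↦ setLIntegral_Ioo_inv_pow_mul_indicator_closedBall_le hn hr g y
    _ = ENNReal.ofReal (r ^ n / n) * ∫⁻ y in closedBall 0 r, g y / ‖y‖ₑ ^ n ∂ν := by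
        rw [lintegral_indicator measurableSet_closedBall,
          lintegral_const_mul' _ _ ENNReal.ofReal_ne_top]

theorem ofReal_pow_div_ofReal_pow_le_ofReal_zpow {x : ℝ} (hx : 0 ≤ x) {a b : ℕ} (hb : b ≠ 0) :
    ENNReal.ofReal (x ^ b) / ENNReal.ofReal x ^ a ≤ ENNReal.ofReal (x ^ ((b : ℤ) - a)) := by
  rcases hx.eq_or_lt with rfl | hx0
  · simp [zero_pow hb]
  · rw [← ENNReal.ofReal_pow hx, ← ENNReal.ofReal_div_of_pos (by positivity), zpow_sub₀ hx0.ne',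
      zpow_natCast, zpow_natCast]

/-- The key change-of-variables estimate: for non-negative measurable `h`,
`∫_{B(0,r)} ‖x‖^{k+1} (∫_0^1 (1-t)^k h(tx) dt) dx
   ≤ (r^{k+d}/(k+d)) ∫_{B(0,r)} ‖y‖^{1-d} h(y) dy`. -/
theorem stmt13 {d : ℕ} (hd : 1 ≤ d) (k : ℕ) (r : ℝ) (hr : 0 < r)
    (h : EuclideanSpace ℝ (Fin d) → ℝ≥0∞) (hm : Measurable h) :
    (∫⁻ x in Metric.closedBall (0 : EuclideanSpace ℝ (Fin d)) r,
        ENNReal.ofReal (‖x‖ ^ (k + 1)) *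
          ∫⁻ t in Set.Ioo (0 : ℝ) 1, ENNReal.ofReal ((1 - t) ^ k) * h (t • x))
      ≤ ENNReal.ofReal (r ^ (k + d) / (k + d)) *
        ∫⁻ y in Metric.closedBall (0 : EuclideanSpace ℝ (Fin d)) r,
          ENNReal.ofReal (‖y‖ ^ (1 - (d : ℤ))) * h y := by
  calc _ ≤ ∫⁻ x in closedBall 0 r, ∫⁻ t in Ioo (0 : ℝ) 1,
          ENNReal.ofReal (‖x‖ ^ (k + 1)) * h (t • x) := by
        refine lintegral_mono fun x ↦ ?_
        rw [← lintegral_const_mul' _ _ ENNReal.ofReal_ne_top]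
        refine setLIntegral_mono' measurableSet_Ioo fun t ht ↦ mul_le_mul_right ?_ _
        refine mul_le_of_le_one_left' (ENNReal.ofReal_le_one.2 (pow_le_one₀ ?_ ?_)) <;>
          linarith [ht.1, ht.2]
    _ = ∫⁻ t in Ioo (0 : ℝ) 1, ∫⁻ x in closedBall 0 r,
          ENNReal.ofReal (‖x‖ ^ (k + 1)) * h (t • x) :=
        lintegral_lintegral_swap (by fun_prop)
    _ = ∫⁻ t in Ioo (0 : ℝ) 1, ENNReal.ofReal ((t ^ (k + d + 1))⁻¹) *
          ∫⁻ y in closedBall 0 (t * r), ENNReal.ofReal (‖y‖ ^ (k + 1)) * h y := by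
        refine setLIntegral_congr_fun measurableSet_Ioo fun t ht ↦ ?_
        rw [setLIntegral_closedBall_norm_pow_mul_comp_smul_of_pos volume ht.1 hm,
          finrank_euclideanSpace_fin, show d + (k + 1) = k + d + 1 by ring]
    _ ≤ ENNReal.ofReal (r ^ (k + d) / (k + d : ℕ)) *
          ∫⁻ y in closedBall 0 r, ENNReal.ofReal (‖y‖ ^ (k + 1)) * h y / ‖y‖ₑ ^ (k + d) :=
        lintegral_Ioo_inv_pow_mul_setLIntegral_closedBall_le volume (by omega) hr (by fun_prop)
    _ ≤ _ := by
        push_cast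
        gcongr with y
        rw [ENNReal.mul_div_right_comm, ← ofReal_norm]
        gcongr
        rw [show 1 - (d : ℤ) = (k + 1 : ℕ) - (k + d : ℕ) by push_cast; ring]
        exact ofReal_pow_div_ofReal_pow_le_ofReal_zpow (norm_nonneg y) k.succ_ne_zero
end

section
/- Let d ≥ 1, r > 0, k ∈ ℕ, and let f : ℝ^d → ℝ be infinitely differentiable on a neighborhood of the closed Euclidean ball B(0,r). Then ∫_{B(0,r)} |f(x) − (T̃_k f)(x)| dx ≤ (1/k!) · (r^{k+d}/(k+d)) · ∫_{B(0,r)} ‖y‖_2^{1−d} · |(∂_ν^{k+1} f)(y)| dy. -/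
open MeasureTheory Set intervalIntegral
open scoped ENNReal NNReal

/-- Auxiliary: iterated derivative within `Icc a b` agrees with the global one at interior
points, for a function. -/
lemma iterDW_eq_iterD {g : ℝ → ℝ} {a b t : ℝ} (j : ℕ) (h : Set.Icc a b ∈ nhds t) :
    iteratedDerivWithin j g (Set.Icc a b) t = iteratedDeriv j g t := by
  rw [iteratedDerivWithin, iteratedDeriv, ← Set.univ_inter (Set.Icc a b),
    iteratedFDerivWithin_inter h, iteratedFDerivWithin_univ]

/-- Taylor remainder, integral form bound. -/
lemma taylor_ray {g : ℝ → ℝ} {V : Set ℝ} (hV : IsOpen V) (hIV : Set.Icc (0:ℝ) 1 ⊆ V)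
    (hg : ContDiffOn ℝ (⊤ : ℕ∞) g V) (k : ℕ) :
    ENNReal.ofReal |g 1 - ∑ j ∈ Finset.range (k + 1), iteratedDeriv j g 0 / (j.factorial : ℝ)|
      ≤ ∫⁻ t in Set.Ioo (0:ℝ) 1,
          ENNReal.ofReal (((k.factorial : ℝ))⁻¹ * (1 - t) ^ k * |iteratedDeriv (k+1) g t|) := by
  obtain ⟨δ, δpos, hδ⟩ := isCompact_Icc.exists_thickening_subset_open hV hIV
  set a : ℝ := -(δ/2) with ha
  set b : ℝ := 1 + δ/2 with hb
  have hab : a < b := by simp only [ha, hb]; nlinarith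
  have hsub : Set.Icc a b ⊆ V := by
    intro y hy
    apply hδ
    rw [Metric.mem_thickening_iff]
    refine ⟨max 0 (min 1 y), ⟨le_max_left _ _, max_le zero_le_one (min_le_left _ _)⟩, ?_⟩
    rw [Real.dist_eq]
    rcases le_total y 0 with h0 | h0
    · rcases le_total (1:ℝ) y with h1 | h1
      · nlinarith
      · rw [min_eq_right h1, max_eq_left h0]
        simp only [ha] at hy
        have := hy.1
        rw [abs_of_nonpos (by linarith)]
        linarith
    · rcases le_total (1:ℝ) y with h1 | h1
      · rw [min_eq_left h1, max_eq_right (by linarith : (0:ℝ) ≤ 1)]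
        have := hy.2
        simp only [hb] at this
        rw [abs_of_nonneg (by linarith)]
        linarith
      · rw [min_eq_right h1, max_eq_right h0]
        simp [δpos]
  have hIoo : Set.Icc (0:ℝ) 1 ⊆ Set.Ioo a b := fun y hy =>
    ⟨by simp only [ha]; nlinarith [hy.1], by simp only [hb]; nlinarith [hy.2]⟩
  have hgI : ContDiffOn ℝ (⊤ : ℕ∞) g (Set.Icc a b) := hg.mono hsub
  have hnhds : ∀ t ∈ Set.Icc (0:ℝ) 1, Set.Icc a b ∈ nhds t := fun t ht =>
    mem_nhds_iff.2 ⟨Set.Ioo a b, Set.Ioo_subset_Icc_self, isOpen_Ioo, hIoo ht⟩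
  -- FTC for the Taylor polynomial evaluated at 1
  set F' : ℝ → ℝ := fun t =>
    (((k.factorial : ℝ))⁻¹ * (1 - t) ^ k) • iteratedDerivWithin (k+1) g (Set.Icc a b) t with hF'
  have hderiv : ∀ t ∈ Set.uIcc (0:ℝ) 1,
      HasDerivAt (fun y => taylorWithinEval g k (Set.Icc a b) y 1) (F' t) t := by
    intro t ht
    rw [Set.uIcc_of_le zero_le_one] at ht
    exact taylorWithinEval_hasDerivAt_Ioo 1 hab (hIoo ht)
      (hgI.of_le (by exact_mod_cast le_top))
      ((hgI.differentiableOn_iteratedDerivWithin (by exact_mod_cast lt_top_iff_ne_top.2 (by simp))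
        (uniqueDiffOn_Icc hab)).mono Set.Ioo_subset_Icc_self)
  have hcont : ContinuousOn (iteratedDerivWithin (k+1) g (Set.Icc a b)) (Set.Icc a b) :=
    hgI.continuousOn_iteratedDerivWithin (by exact_mod_cast le_top) (uniqueDiffOn_Icc hab)
  have hint : IntervalIntegrable F' volume 0 1 := by
    apply ContinuousOn.intervalIntegrable
    rw [Set.uIcc_of_le zero_le_one]
    exact (continuousOn_const.mul ((continuousOn_const.sub continuousOn_id).pow k)).smul
      (hcont.mono (hIoo.trans Set.Ioo_subset_Icc_self))
  have hFTC := intervalIntegral.integral_eq_sub_of_hasDerivAt hderiv hint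
  have hF1 : taylorWithinEval g k (Set.Icc a b) 1 1 = g 1 := taylorWithinEval_self _ _ _ _
  have hF0 : taylorWithinEval g k (Set.Icc a b) 0 1
      = ∑ j ∈ Finset.range (k + 1), iteratedDeriv j g 0 / (j.factorial : ℝ) := by
    rw [taylor_within_apply]
    refine Finset.sum_congr rfl fun j hj => ?_
    rw [iterDW_eq_iterD j (hnhds 0 (by norm_num))]
    simp [smul_eq_mul, div_eq_inv_mul]
  have key : g 1 - ∑ j ∈ Finset.range (k + 1), iteratedDeriv j g 0 / (j.factorial : ℝ)
      = ∫ t in (0:ℝ)..1, F' t := by rw [hFTC, hF1, hF0]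
  rw [key]
  have habs : |∫ t in (0:ℝ)..1, F' t| ≤ ∫ t in (0:ℝ)..1, |F' t| :=
    intervalIntegral.abs_integral_le_integral_abs zero_le_one
  calc ENNReal.ofReal |∫ t in (0:ℝ)..1, F' t| ≤ ENNReal.ofReal (∫ t in (0:ℝ)..1, |F' t|) :=
        ENNReal.ofReal_le_ofReal habs
    _ = ∫⁻ t in Set.Ioc (0:ℝ) 1, ENNReal.ofReal |F' t| := by
        rw [intervalIntegral.integral_of_le zero_le_one]
        apply ofReal_integral_eq_lintegral_ofReal
        · exact hint.1.abs
        · exact Filter.Eventually.of_forall fun t => abs_nonneg _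
    _ = ∫⁻ t in Set.Ioo (0:ℝ) 1, ENNReal.ofReal |F' t| := by
        rw [Measure.restrict_congr_set Ioo_ae_eq_Ioc]
    _ ≤ _ := by
        apply lintegral_mono_ae
        filter_upwards [ae_restrict_mem measurableSet_Ioo] with t ht
        apply ENNReal.ofReal_le_ofReal
        have h1t : (0:ℝ) ≤ (1 - t) ^ k := pow_nonneg (by linarith [ht.2]) k
        rw [show F' t = ((k.factorial : ℝ))⁻¹ * (1 - t) ^ k
              * iteratedDerivWithin (k+1) g (Set.Icc a b) t from rfl]
        rw [abs_mul, iterDW_eq_iterD _ (hnhds t ⟨ht.1.le, ht.2.le⟩),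
          abs_of_nonneg (by positivity : (0:ℝ) ≤ ((k.factorial : ℝ))⁻¹ * (1 - t) ^ k)]

lemma aux_t_integral {m : ℕ} (hm : 1 ≤ m) {a : ℝ} (ha : 0 < a) {c : ℝ} (hc : 0 ≤ c) :
    ∫⁻ t in Set.Ico a 1, ENNReal.ofReal (c * t ^ (-(m:ℤ) - 1))
      ≤ ENNReal.ofReal (c * (a ^ (-(m:ℤ)) / m)) := by
  rcases le_or_gt 1 a with h1 | h1
  · rw [Set.Ico_eq_empty (by linarith : ¬ a < 1), Measure.restrict_empty, lintegral_zero_measure]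
    exact zero_le
  · have hn1 : (-(m:ℤ) - 1) ≠ -1 := by omega
    have h0 : (0:ℝ) ∉ Set.uIcc a 1 := by
      rw [Set.uIcc_of_le h1.le]; exact fun h => absurd h.1 (by linarith)
    have hcont : ContinuousOn (fun t : ℝ => c * t ^ (-(m:ℤ) - 1)) (Set.Icc a 1) := by
      refine continuousOn_const.mul (fun t ht => ?_)
      exact (continuousAt_zpow₀ _ _ (Or.inl (ne_of_gt (lt_of_lt_of_le ha ht.1)))).continuousWithinAt
    have hint : IntegrableOn (fun t : ℝ => c * t ^ (-(m:ℤ) - 1)) (Set.Ioc a 1) :=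
      (hcont.integrableOn_Icc).mono_set Set.Ioc_subset_Icc_self
    rw [Measure.restrict_congr_set Ico_ae_eq_Ioc,
      ← ofReal_integral_eq_lintegral_ofReal hint ?_]
    · apply ENNReal.ofReal_le_ofReal
      rw [← intervalIntegral.integral_of_le h1.le, intervalIntegral.integral_const_mul,
        integral_zpow (Or.inr ⟨hn1, h0⟩)]
      have : (-(m:ℤ) - 1) + 1 = -(m:ℤ) := by ring
      rw [this]
      have hm0 : (0:ℝ) < (m:ℝ) := by exact_mod_cast hm
      have honem : (1:ℝ) ^ (-(m:ℤ)) = 1 := one_zpow _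
      rw [honem]
      push_cast
      have key : (1 - a ^ (-(m:ℤ))) / (-(m:ℝ) - 1 + 1) ≤ a ^ (-(m:ℤ)) / (m:ℝ) := by
        have h2 : (-(m:ℝ) - 1 + 1) = -(m:ℝ) := by ring
        rw [h2, div_neg, ← neg_div, neg_sub]
        exact (div_le_div_iff_of_pos_right hm0).2 (by linarith)
      exact mul_le_mul_of_nonneg_left key hc
    · filter_upwards [ae_restrict_mem measurableSet_Ioc] with t ht
      have : (0:ℝ) < t := lt_trans ha ht.1
      positivity

open MeasureTheory

set_option maxHeartbeats 1000000 in
/-- The `L_1` error of the ray-wise Taylor approximation `T̃_k f` on the ball `B(0,r)` is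
bounded by `(1/k!) (r^{k+d}/(k+d)) ∫_{B(0,r)} ‖y‖^{1-d} |∂_ν^{k+1} f(y)| dy`. -/
theorem stmt14 {d : ℕ} (hd : 1 ≤ d) (r : ℝ) (hr : 0 < r) (k : ℕ)
    (f : EuclideanSpace ℝ (Fin d) → ℝ)
    (U : Set (EuclideanSpace ℝ (Fin d))) (hU : IsOpen U)
    (hBU : Metric.closedBall 0 r ⊆ U) (hf : ContDiffOn ℝ (⊤ : ℕ∞) f U) :
    (∫⁻ x in Metric.closedBall (0 : EuclideanSpace ℝ (Fin d)) r,
        ENNReal.ofReal |f x - ∑ j ∈ Finset.range (k + 1),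
          iteratedDeriv j (fun t : ℝ => f (t • x)) 0 / (j.factorial : ℝ)|)
      ≤ ENNReal.ofReal (1 / (k.factorial : ℝ) * (r ^ (k + d) / (k + d))) *
        ∫⁻ y in Metric.closedBall (0 : EuclideanSpace ℝ (Fin d)) r,
          ENNReal.ofReal (‖y‖ ^ (1 - (d : ℤ)) *
            |iteratedFDeriv ℝ (k + 1) f y (fun _ => ‖y‖⁻¹ • y)|) := by
  classical
  haveI : Nonempty (Fin d) := ⟨⟨0, hd⟩⟩
  set B : Set (EuclideanSpace ℝ (Fin d)) := Metric.closedBall 0 r with hB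
  set I : Set ℝ := Set.Ioo (0:ℝ) 1 with hI
  set Φ : EuclideanSpace ℝ (Fin d) → ℝ := fun y => iteratedFDeriv ℝ (k + 1) f y (fun _ => ‖y‖⁻¹ • y) with hΦ
  set P : Set (EuclideanSpace ℝ (Fin d)) := U \ {0} with hP
  have hPopen : IsOpen P := by rw [hP]; exact hU.sdiff isClosed_singleton
  have hBP : ∀ y : EuclideanSpace ℝ (Fin d), y ∈ B → y ≠ 0 → y ∈ P := fun y hy hy0 => ⟨hBU hy, hy0⟩
  -- continuity of Φ on P
  have hDc : ContinuousOn (iteratedFDeriv ℝ (k + 1) f) U := by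
    have h1 := hf.continuousOn_iteratedFDerivWithin (m := k + 1) (by exact_mod_cast le_top) hU.uniqueDiffOn
    exact h1.congr fun y hy => (iteratedFDerivWithin_of_isOpen (k+1) hU hy).symm
  have hΦc : ContinuousOn Φ P := by
    have hν : ContinuousOn (fun y : EuclideanSpace ℝ (Fin d) => ‖y‖⁻¹ • y) P := by
      refine ContinuousOn.smul (ContinuousOn.inv₀ continuous_norm.continuousOn ?_)
        continuous_id.continuousOn
      exact fun y hy => norm_ne_zero_iff.2 hy.2
    exact continuous_eval.comp_continuousOn
      ((hDc.mono diff_subset).prodMk (continuousOn_pi.2 fun _ => hν))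
  set Φ₀ : EuclideanSpace ℝ (Fin d) → ℝ := P.piecewise (fun y => |Φ y|) (fun _ => 0) with hΦ₀
  have hΦ₀m : Measurable Φ₀ :=
    ContinuousOn.measurable_piecewise hΦc.abs continuousOn_const hPopen.measurableSet
  set G : EuclideanSpace ℝ (Fin d) → ℝ≥0∞ := fun y => ENNReal.ofReal (Φ₀ y) with hG
  have hGm : Measurable G := ENNReal.measurable_ofReal.comp hΦ₀m
  have hGP : ∀ y ∈ P, G y = ENNReal.ofReal |Φ y| := fun y hy => by
    simp [hG, hΦ₀, Set.piecewise_eq_of_mem _ _ _ hy]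
  set S : Set (ℝ × EuclideanSpace ℝ (Fin d)) := {q : ℝ × EuclideanSpace ℝ (Fin d) | ‖q.2‖ ≤ q.1 * r} with hS
  have hSm : MeasurableSet S :=
    (isClosed_le (continuous_snd.norm) (continuous_fst.mul continuous_const)).measurableSet
  set Q : ℝ → EuclideanSpace ℝ (Fin d) → ℝ≥0∞ := fun t x =>
    ENNReal.ofReal ((1 - t) ^ k * ((k.factorial : ℝ))⁻¹ * ‖x‖ ^ (k+1)) * G (t • x) with hQ
  set H : ℝ → EuclideanSpace ℝ (Fin d) → ℝ≥0∞ := fun t y =>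
    ENNReal.ofReal ((1 - t) ^ k * ((k.factorial : ℝ))⁻¹ * (t⁻¹ * ‖y‖) ^ (k+1)) * G y *
      S.indicator 1 (t, y) with hH
  set F₂ : ℝ → EuclideanSpace ℝ (Fin d) → ℝ≥0∞ := fun t y => ENNReal.ofReal ((t ^ d)⁻¹) * H t y with hF₂
  set C : ℝ := 1 / (k.factorial : ℝ) * (r ^ (k + d) / (k + d)) with hC
  -- step 1
  have step1 : ∀ x ∈ B, x ≠ 0 →
      ENNReal.ofReal |f x - ∑ j ∈ Finset.range (k + 1),
          iteratedDeriv j (fun t : ℝ => f (t • x)) 0 / (j.factorial : ℝ)|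
        ≤ ∫⁻ t in I, Q t x := by
    intro x hxB hx0
    have hxr : ‖x‖ ≤ r := by simpa [hB] using hxB
    have hxn : ‖x‖ ≠ 0 := norm_ne_zero_iff.2 hx0
    set L : ℝ →L[ℝ] EuclideanSpace ℝ (Fin d) := ContinuousLinearMap.toSpanSingleton ℝ x with hL
    have hLapp : ∀ t : ℝ, L t = t • x := fun t => ContinuousLinearMap.toSpanSingleton_apply ℝ x t
    have hVopen : IsOpen (L ⁻¹' U) := hU.preimage L.continuous
    have htU : ∀ t : ℝ, 0 ≤ t → t ≤ 1 → t • x ∈ U := by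
      intro t h0 h1
      apply hBU
      rw [Metric.mem_closedBall, dist_zero_right, norm_smul, Real.norm_eq_abs, abs_of_nonneg h0]
      calc t * ‖x‖ ≤ 1 * ‖x‖ := by
            apply mul_le_mul_of_nonneg_right h1 (norm_nonneg x)
        _ ≤ r := by rw [one_mul]; exact hxr
    have hIV : Set.Icc (0:ℝ) 1 ⊆ L ⁻¹' U := by
      intro t ht
      rw [Set.mem_preimage, hLapp]
      exact htU t ht.1 ht.2
    have hg : ContDiffOn ℝ (⊤ : ℕ∞) (fun t : ℝ => f (t • x)) (L ⁻¹' U) := by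
      apply hf.comp ((contDiff_id.smul contDiff_const).contDiffOn)
      intro t ht
      rw [Set.mem_preimage, hLapp] at ht
      exact ht
    have h0 := taylor_ray hVopen hIV hg k
    simp only [one_smul] at h0
    refine h0.trans (lintegral_mono_ae ?_)
    filter_upwards [ae_restrict_mem measurableSet_Ioo] with t ht
    obtain ⟨ht0, ht1⟩ := ht
    have htxU : t • x ∈ U := htU t ht0.le ht1.le
    have hDg : iteratedDeriv (k+1) (fun s : ℝ => f (s • x)) t
        = iteratedFDeriv ℝ (k+1) f (t • x) (fun _ => x) := by
      have hfg : (fun s : ℝ => f (s • x)) = f ∘ L := by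
        funext s; simp [hLapp]
      have hLt : L t ∈ U := by rw [hLapp]; exact htxU
      have hcomp := L.iteratedFDerivWithin_comp_right (f := f) hf hU.uniqueDiffOn
        hVopen.uniqueDiffOn hLt (by exact_mod_cast (le_top : ((k+1 : ℕ) : ℕ∞) ≤ ⊤) : ((k+1 : ℕ) : WithTop ℕ∞) ≤ ((⊤ : ℕ∞) : WithTop ℕ∞))
      have htV : t ∈ L ⁻¹' U := hLt
      calc iteratedDeriv (k+1) (fun s : ℝ => f (s • x)) t
          = iteratedFDeriv ℝ (k+1) (f ∘ L) t (fun _ => 1) := by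
            rw [hfg, iteratedDeriv_eq_iteratedFDeriv]
        _ = iteratedFDerivWithin ℝ (k+1) (f ∘ L) (L ⁻¹' U) t (fun _ => 1) := by
            rw [iteratedFDerivWithin_of_isOpen (k+1) hVopen htV]
        _ = iteratedFDerivWithin ℝ (k+1) f U (L t) (fun _ => L 1) := by
            rw [hcomp]; rfl
        _ = iteratedFDeriv ℝ (k+1) f (t • x) (fun _ => x) := by
            rw [iteratedFDerivWithin_of_isOpen (k+1) hU hLt]
            simp only [hLapp, one_smul]
    have hscale : iteratedFDeriv ℝ (k+1) f (t • x) (fun _ => x)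
        = ‖x‖ ^ (k+1) • iteratedFDeriv ℝ (k+1) f (t • x) (fun _ => ‖x‖⁻¹ • x) := by
      have hvec : (fun _ : Fin (k+1) => x)
          = fun i : Fin (k+1) => (fun _ : Fin (k+1) => ‖x‖) i •
              (fun _ : Fin (k+1) => ‖x‖⁻¹ • x) i := by
        funext i
        simp [smul_smul, mul_inv_cancel₀ hxn]
      rw [hvec, ContinuousMultilinearMap.map_smul_univ]
      simp [Finset.prod_const, Finset.card_univ]
    have hray : ‖t • x‖⁻¹ • (t • x) = ‖x‖⁻¹ • x := by
      rw [norm_smul, Real.norm_eq_abs, abs_of_pos ht0, smul_smul]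
      congr 1
      field_simp
    have htP : t • x ∈ P :=
      ⟨htxU, by simp [smul_ne_zero ht0.ne' hx0]⟩
    simp only [hQ]
    rw [hGP _ htP]
    simp only [hΦ]
    rw [hray, hDg, hscale, smul_eq_mul, abs_mul,
      abs_of_nonneg (pow_nonneg (norm_nonneg x) (k+1)),
      ← ENNReal.ofReal_mul (mul_nonneg (mul_nonneg (pow_nonneg (by linarith) k)
        (by positivity)) (by positivity))]
    apply ENNReal.ofReal_le_ofReal
    apply le_of_eq
    ring
  -- step 2
  have step2 : (∫⁻ x in B,
        ENNReal.ofReal |f x - ∑ j ∈ Finset.range (k + 1),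
          iteratedDeriv j (fun t : ℝ => f (t • x)) 0 / (j.factorial : ℝ)|)
      ≤ ∫⁻ x in B, ∫⁻ t in I, Q t x := by
    apply lintegral_mono_ae
    have h0 : volume.restrict B {(0:EuclideanSpace ℝ (Fin d))} = 0 :=
      le_antisymm (le_trans (Measure.restrict_le_self _) (by simp)) zero_le
    filter_upwards [ae_restrict_mem measurableSet_closedBall,
      (by rw [mem_ae_iff]; simpa using h0 : {x : EuclideanSpace ℝ (Fin d) | x ≠ 0} ∈ ae (volume.restrict B))]
      with x hxB hx0
    exact step1 x hxB hx0
  -- step 3 : Tonelli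
  have hQm : Measurable (Function.uncurry fun x t => Q t x) := by
    apply Measurable.fun_mul
    · apply ENNReal.measurable_ofReal.comp
      apply Measurable.fun_mul
      · exact (((measurable_const.sub measurable_snd).pow_const k).mul measurable_const)
      · exact (measurable_fst.norm.pow_const (k+1))
    · exact hGm.comp (measurable_snd.smul measurable_fst)
  have step3 : (∫⁻ x in B, ∫⁻ t in I, Q t x) = ∫⁻ t in I, ∫⁻ x in B, Q t x :=
    lintegral_lintegral_swap hQm.aemeasurable
  -- step 4
  have step4 : ∀ t ∈ I, (∫⁻ x in B, Q t x) = ∫⁻ y, F₂ t y := by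
    intro t ht
    have ht0 : (0:ℝ) < t := ht.1
    have hHm : Measurable (H t) := by
      apply Measurable.mul
      · exact (ENNReal.measurable_ofReal.comp
          ((measurable_const.mul ((measurable_const.mul measurable_norm).pow_const (k+1))))).mul hGm
      · exact (measurable_one.indicator hSm).comp (measurable_const.prodMk measurable_id)
    have key : ∀ x : EuclideanSpace ℝ (Fin d),
        B.indicator (fun x => Q t x) x = H t (t • x) := by
      intro x
      have hnorm : ‖t • x‖ = t * ‖x‖ := by
        rw [norm_smul, Real.norm_eq_abs, abs_of_pos ht0]
      by_cases hx : x ∈ B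
      · rw [Set.indicator_of_mem hx, hQ, hH]
        have hmem : (t, t • x) ∈ S := by
          rw [hS]; simp only [Set.mem_setOf_eq, hnorm]
          exact mul_le_mul_of_nonneg_left (by simpa [hB] using hx) ht0.le
        simp only [Set.indicator_of_mem hmem, Pi.one_apply, mul_one, hnorm]
        rw [← mul_assoc t⁻¹ t, inv_mul_cancel₀ ht0.ne', one_mul]
      · rw [Set.indicator_of_notMem hx, hH]
        have hmem : (t, t • x) ∉ S := by
          rw [hS]; simp only [Set.mem_setOf_eq, hnorm, not_le]
          exact mul_lt_mul_of_pos_left (by simpa [hB] using hx) ht0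
        simp [Set.indicator_of_notMem hmem]
    calc (∫⁻ x in B, Q t x)
        = ∫⁻ x, H t (t • x) := by
          rw [hB, ← lintegral_indicator measurableSet_closedBall]
          exact lintegral_congr fun x => by rw [← key x, hB]
      _ = ∫⁻ y, H t y ∂(Measure.map (fun x => t • x) volume) :=
          (lintegral_map hHm (measurable_const_smul t)).symm
      _ = ENNReal.ofReal |((t ^ Module.finrank ℝ (EuclideanSpace ℝ (Fin d)))⁻¹)| *
            ∫⁻ y, H t y := by
          rw [Measure.map_addHaar_smul volume ht0.ne', lintegral_smul_measure, smul_eq_mul]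
      _ = ∫⁻ y, F₂ t y := by
          rw [finrank_euclideanSpace_fin, abs_of_pos (by positivity),
            ← lintegral_const_mul' _ _ ENNReal.ofReal_ne_top]
  -- step 5 : Tonelli back
  have hF₂m : Measurable (Function.uncurry F₂) := by
    apply Measurable.mul
    · exact ENNReal.measurable_ofReal.comp ((measurable_fst.pow_const d).inv)
    · apply Measurable.mul
      · apply Measurable.fun_mul
        · apply ENNReal.measurable_ofReal.comp
          exact (((measurable_const.sub measurable_fst).pow_const k).mul measurable_const).mul
            ((measurable_fst.inv.mul measurable_snd.norm).pow_const (k+1))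
        · exact hGm.comp measurable_snd
      · exact (measurable_one.indicator hSm).comp measurable_id
  have step5 : (∫⁻ t in I, ∫⁻ y, F₂ t y) = ∫⁻ y, ∫⁻ t in I, F₂ t y :=
    lintegral_lintegral_swap hF₂m.aemeasurable
  -- step 6
  have step6 : ∀ y : EuclideanSpace ℝ (Fin d), (∫⁻ t in I, F₂ t y)
      ≤ B.indicator (fun y => ENNReal.ofReal C *
          (ENNReal.ofReal (‖y‖ ^ (1 - (d:ℤ))) * G y)) y := by
    intro y
    by_cases hyB : y ∈ B
    · rw [Set.indicator_of_mem hyB]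
      by_cases hy0 : y = 0
      · have hz : ∀ t ∈ I, F₂ t y = 0 := by
          intro t ht
          simp only [hF₂, hH]
          rw [hy0]
          simp [zero_pow (Nat.succ_ne_zero k)]
        rw [setLIntegral_congr_fun measurableSet_Ioo hz]
        simp
      · have hy : (0:ℝ) < ‖y‖ := norm_pos_iff.2 hy0
        have hyr : ‖y‖ ≤ r := by simpa [hB] using hyB
        set a : ℝ := ‖y‖ / r with ha
        have ha0 : 0 < a := div_pos hy hr
        set m : ℕ := k + d with hm
        have hm1 : 1 ≤ m := by rw [hm]; omega
        set c₀ : ℝ := ((k.factorial : ℝ))⁻¹ * ‖y‖ ^ (k+1) with hc₀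
        have hc₀0 : 0 ≤ c₀ := by positivity
        have hpt : ∀ t ∈ I, F₂ t y
            ≤ (Set.Ico a 1).indicator (fun t => ENNReal.ofReal (c₀ * t ^ (-(m:ℤ) - 1))) t * G y := by
          intro t ht
          obtain ⟨ht0, ht1⟩ := ht
          simp only [hF₂, hH]
          by_cases hty : (t, y) ∈ S
          · have hat : a ≤ t := by
              rw [ha, div_le_iff₀ hr]; exact hty
            have htIco : t ∈ Set.Ico a 1 := ⟨hat, ht1⟩
            simp only [Set.indicator_of_mem hty, Pi.one_apply, mul_one]
            rw [Set.indicator_of_mem htIco]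
            rw [← mul_assoc, ← ENNReal.ofReal_mul (by positivity)]
            apply mul_le_mul_left
            apply ENNReal.ofReal_le_ofReal
            have h1t : (1 - t) ^ k ≤ 1 := pow_le_one₀ (by linarith) (by linarith)
            have e : (t:ℝ) ^ (-(m:ℤ) - 1) = (t ^ d)⁻¹ * (t⁻¹) ^ (k+1) := by
              have : (-(m:ℤ) - 1) = (-(d:ℤ)) + (-(((k+1:ℕ)):ℤ)) := by rw [hm]; push_cast; ring
              rw [this, zpow_add₀ ht0.ne']
              congr 1
              · rw [zpow_neg, zpow_natCast]
              · rw [zpow_neg, zpow_natCast, inv_pow]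
            calc (t ^ d)⁻¹ * ((1 - t) ^ k * ((k.factorial : ℝ))⁻¹ * (t⁻¹ * ‖y‖) ^ (k+1))
                ≤ (t ^ d)⁻¹ * (1 * ((k.factorial : ℝ))⁻¹ * (t⁻¹ * ‖y‖) ^ (k+1)) := by
                  gcongr
              _ = c₀ * t ^ (-(m:ℤ) - 1) := by
                  rw [one_mul, mul_pow, e, hc₀]; ring
          · rw [Set.indicator_of_notMem hty]
            simp only [mul_zero, zero_mul]
            exact zero_le
        have hzm : Measurable fun t : ℝ => ENNReal.ofReal (c₀ * t ^ (-(m:ℤ) - 1)) := by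
          have hzz : ∀ t : ℝ, t ^ (-(m:ℤ) - 1) = (t ^ (m+1))⁻¹ := fun t => by
            rw [show (-(m:ℤ) - 1) = -(((m+1 : ℕ)) : ℤ) by push_cast; ring, zpow_neg, zpow_natCast]
          simp only [hzz]
          exact ENNReal.measurable_ofReal.comp
            (measurable_const.mul ((measurable_id.pow_const (m+1)).inv))
        calc (∫⁻ t in I, F₂ t y)
            ≤ ∫⁻ t in I,
                (Set.Ico a 1).indicator (fun t => ENNReal.ofReal (c₀ * t ^ (-(m:ℤ) - 1))) t * G y :=
              setLIntegral_mono_ae ((hzm.indicator measurableSet_Ico).mul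
                measurable_const).aemeasurable (Filter.Eventually.of_forall hpt)
          _ = (∫⁻ t in I,
                (Set.Ico a 1).indicator (fun t => ENNReal.ofReal (c₀ * t ^ (-(m:ℤ) - 1))) t) * G y := by
              rw [lintegral_mul_const]
              exact hzm.indicator measurableSet_Ico
          _ ≤ ENNReal.ofReal (c₀ * (a ^ (-(m:ℤ)) / m)) * G y := by
              apply mul_le_mul_left
              rw [hI, lintegral_indicator measurableSet_Ico,
                Measure.restrict_restrict measurableSet_Ico]
              calc (∫⁻ t in Set.Ico a 1 ∩ Set.Ioo 0 1, ENNReal.ofReal (c₀ * t ^ (-(m:ℤ) - 1)))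
                  ≤ ∫⁻ t in Set.Ico a 1, ENNReal.ofReal (c₀ * t ^ (-(m:ℤ) - 1)) :=
                    lintegral_mono' (Measure.restrict_mono Set.inter_subset_left le_rfl) le_rfl
                _ ≤ _ := aux_t_integral hm1 ha0 hc₀0
          _ = ENNReal.ofReal C * (ENNReal.ofReal (‖y‖ ^ (1 - (d:ℤ))) * G y) := by
              have hyne : (‖y‖ : ℝ) ≠ 0 := hy.ne'
              have e2 : ‖y‖ ^ (k+1) * (‖y‖ ^ (-(m:ℤ))) = ‖y‖ ^ (1 - (d:ℤ)) := by
                rw [← zpow_natCast ‖y‖ (k+1), ← zpow_add₀ hyne]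
                congr 1
                rw [hm]; push_cast; ring
              have e3 : a ^ (-(m:ℤ)) = ‖y‖ ^ (-(m:ℤ)) * r ^ (m:ℕ) := by
                rw [ha, div_zpow, zpow_neg r, div_eq_mul_inv, inv_inv, zpow_natCast]
              have key : c₀ * (a ^ (-(m:ℤ)) / m) = C * ‖y‖ ^ (1 - (d:ℤ)) := by
                rw [hc₀, e3]
                have e4 : ((k.factorial:ℝ))⁻¹ * ‖y‖ ^ (k+1) * (‖y‖ ^ (-(m:ℤ)) * r ^ m / m)
                    = ((k.factorial:ℝ))⁻¹ * (r ^ m / (m:ℝ)) * (‖y‖ ^ (k+1) * ‖y‖ ^ (-(m:ℤ))) := by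
                  ring
                rw [e4, e2, hC, one_div]
                rw [hm]
                push_cast
                ring
              rw [key, ENNReal.ofReal_mul (by rw [hC]; positivity), mul_assoc]
    · rw [Set.indicator_of_notMem hyB]
      have hz : ∀ t ∈ I, F₂ t y = 0 := by
        intro t ht
        simp only [hF₂, hH]
        have hns : (t, y) ∉ S := by
          rw [hS]
          simp only [Set.mem_setOf_eq, not_le]
          have : r < ‖y‖ := by
            simpa [hB, Metric.mem_closedBall, dist_zero_right, not_le] using hyB
          nlinarith [ht.1, ht.2]
        rw [Set.indicator_of_notMem hns]
        simp
      rw [setLIntegral_congr_fun measurableSet_Ioo hz]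
      simp
  -- assemble
  calc (∫⁻ x in B, ENNReal.ofReal |f x - ∑ j ∈ Finset.range (k + 1),
          iteratedDeriv j (fun t : ℝ => f (t • x)) 0 / (j.factorial : ℝ)|)
      ≤ ∫⁻ x in B, ∫⁻ t in I, Q t x := step2
    _ = ∫⁻ t in I, ∫⁻ x in B, Q t x := step3
    _ = ∫⁻ t in I, ∫⁻ y, F₂ t y :=
        setLIntegral_congr_fun measurableSet_Ioo
          fun t ht => step4 t ht
    _ = ∫⁻ y, ∫⁻ t in I, F₂ t y := step5
    _ ≤ ∫⁻ y, B.indicator (fun y => ENNReal.ofReal C *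
          (ENNReal.ofReal (‖y‖ ^ (1 - (d:ℤ))) * G y)) y := lintegral_mono step6
    _ = ENNReal.ofReal C * ∫⁻ y in B, ENNReal.ofReal (‖y‖ ^ (1 - (d:ℤ))) * G y := by
        rw [lintegral_indicator measurableSet_closedBall,
          lintegral_const_mul' _ _ ENNReal.ofReal_ne_top]
    _ ≤ ENNReal.ofReal C * ∫⁻ y in B,
          ENNReal.ofReal (‖y‖ ^ (1 - (d:ℤ)) * |Φ y|) := by
        apply mul_le_mul_right 
        apply lintegral_mono_ae
        have h0 : volume.restrict B {(0:EuclideanSpace ℝ (Fin d))} = 0 :=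
          le_antisymm (le_trans (Measure.restrict_le_self _) (by simp)) zero_le
        filter_upwards [ae_restrict_mem measurableSet_closedBall,
          (by rw [mem_ae_iff]; simpa using h0 : {x : EuclideanSpace ℝ (Fin d) | x ≠ 0} ∈ ae (volume.restrict B))]
          with y hyB hy0
        rw [hGP y (hBP y hyB hy0), ← ENNReal.ofReal_mul (by positivity)]
end
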